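/- Let p_n ∈ ℤ[z] be defined by p_0 = 0 and p_{n+1} = p_n^2 + z, and for ℓ, n ∈ ℕ set q_{ℓ,n} = p_{ℓ+n} − p_ℓ. For every ℓ ≥ 2 and n ≥ 1, the following degree identity holds: ∑_{k | n} ( η_ℓ(k)·|hyp(k)| + ∑_{j=2}^{ℓ} |mis(j,k)| ) = 2^{ℓ+n−1}, where η_ℓ(k) = ⌊(ℓ−1)/k⌋ + 2. -/

import Mathlib

open Polynomial

/-- The polynomials `p n` defined by `p 0 = 0`, `p (n+1) = p n ^ 2 + X`. -/
noncomputable def P : ℕ → Polynomial ℤ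
  | 0 => 0
  | n + 1 => P n ^ 2 + X

/-- The Misiurewicz–Thurston polynomials `q l n = p (l + n) - p l`. -/
noncomputable def Q (l n : ℕ) : Polynomial ℤ := P (l + n) - P l

/-- `p n` viewed over `ℂ`. -/
noncomputable def pC (n : ℕ) : Polynomial ℂ := (P n).map (Int.castRingHom ℂ)

/-- `q l n` viewed over `ℂ`. -/
noncomputable def qC (l n : ℕ) : Polynomial ℂ := (Q l n).map (Int.castRingHom ℂ)

/-- Hyperbolic centers of order `n`: roots of `p n` that are not roots of `p k`
for any strict divisor `k` of `n`. -/
def hyp (n : ℕ) : Set ℂ :=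
  {z | (pC n).eval z = 0 ∧ ∀ k : ℕ, k ∣ n → k ≠ n → (pC k).eval z ≠ 0}

/-- Misiurewicz points of type `(l, n)`. -/
def mis (l n : ℕ) : Set ℂ :=
  {z | (qC l n).eval z = 0 ∧ (qC (l - 1) n).eval z ≠ 0 ∧
    ∀ k : ℕ, k ∣ n → k ≠ n → (qC l k).eval z ≠ 0}

/-- Gleason's polynomial `h n = ∏_{r ∈ hyp n} (X - r)`. -/
noncomputable def hPoly (n : ℕ) : Polynomial ℂ := ∏ᶠ r ∈ hyp n, (X - C r)

/-- Reduced Misiurewicz polynomial `m l n = ∏_{r ∈ mis l n} (X - r)`. -/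
noncomputable def mPoly (l n : ℕ) : Polynomial ℂ := ∏ᶠ r ∈ mis l n, (X - C r)

/-- The multiplicity `η l k = ⌊(l - 1)/k⌋ + 2`, with the conventions
`η 0 k = 1` (floor taken in `ℤ`) and `η 1 k = 2`. -/
def eta (l k : ℕ) : ℕ := if l = 0 then 1 else (l - 1) / k + 2

lemma P_zero : P 0 = 0 := rfl
lemma P_succ (n : ℕ) : P (n + 1) = P n ^ 2 + X := rfl

lemma P_monic {n : ℕ} (hn : n ≠ 0) : (P n).Monic ∧ (P n).natDegree = 2 ^ (n - 1) := by
  induction n with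
  | zero => simp at hn
  | succ m ih =>
    rcases Nat.eq_zero_or_pos m with hm | hm
    · subst hm
      constructor
      · simpa [P_succ, P_zero] using monic_X
      · simp [P_succ, P_zero]
    · obtain ⟨hmon, hdeg⟩ := ih (by omega)
      have hmon2 : (P m ^ 2).Monic := hmon.pow 2
      have hdeg2 : (P m ^ 2).natDegree = 2 ^ m := by
        rw [hmon.natDegree_pow, hdeg]
        have : m - 1 + 1 = m := by omega
        rw [← pow_succ', this]
      have hlt : degree (X : Polynomial ℤ) < degree (P m ^ 2) := by
        rw [degree_X, degree_eq_natDegree hmon2.ne_zero, hdeg2]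
        exact_mod_cast Nat.one_lt_two_pow (by omega)
      constructor
      · exact hmon2.add_of_left hlt
      · rw [P_succ, natDegree_add_eq_left_of_degree_lt hlt, hdeg2]
        simp

lemma Q_monic {l n : ℕ} (hn : n ≠ 0) : (Q l n).Monic ∧ (Q l n).natDegree = 2 ^ (l + n - 1) := by
  have h1 := P_monic (n := l + n) (by omega)
  have hlt : degree (P l) < degree (P (l + n)) := by
    rcases Nat.eq_zero_or_pos l with hl | hl
    · subst hl
      rw [P_zero, degree_zero]
      exact bot_lt_iff_ne_bot.2 (degree_eq_bot.not.2 h1.1.ne_zero)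
    · have h2 := P_monic (n := l) (by omega)
      rw [degree_eq_natDegree h1.1.ne_zero, degree_eq_natDegree h2.1.ne_zero, h1.2, h2.2]
      exact_mod_cast Nat.pow_lt_pow_right one_lt_two (by omega)
  constructor
  · rw [Q, sub_eq_add_neg]
    exact h1.1.add_of_left (by simpa using hlt)
  · rw [Q, natDegree_sub_eq_left_of_natDegree_lt, h1.2]
    rcases Nat.eq_zero_or_pos l with hl | hl
    · subst hl
      simp only [P_zero, natDegree_zero, Nat.zero_add]
      rw [(P_monic hn).2]
      positivity
    · rw [(P_monic (by omega : l ≠ 0)).2, h1.2]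
      exact Nat.pow_lt_pow_right one_lt_two (by omega)

lemma pC_zero : pC 0 = 0 := by simp [pC, P_zero]
lemma pC_succ (n : ℕ) : pC (n + 1) = pC n ^ 2 + X := by
  simp [pC, P_succ, Polynomial.map_add, Polynomial.map_pow]

lemma qC_eq (l n : ℕ) : qC l n = pC (l + n) - pC l := by
  simp [qC, Q, pC, Polynomial.map_sub]

lemma qC_monic {l n : ℕ} (hn : n ≠ 0) : (qC l n).Monic :=
  (Q_monic hn).1.map _

lemma qC_natDegree {l n : ℕ} (hn : n ≠ 0) : (qC l n).natDegree = 2 ^ (l + n - 1) := by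
  rw [qC, (Q_monic hn).1.natDegree_map, (Q_monic hn).2]

lemma qC_ne_zero {l n : ℕ} (hn : n ≠ 0) : qC l n ≠ 0 := (qC_monic hn).ne_zero

lemma pC_monic {n : ℕ} (hn : n ≠ 0) : (pC n).Monic := (P_monic hn).1.map _
lemma pC_ne_zero {n : ℕ} (hn : n ≠ 0) : pC n ≠ 0 := (pC_monic hn).ne_zero

lemma qC_factor {n : ℕ} : ∀ {l : ℕ}, 1 ≤ l →
    qC l n = pC n ^ 2 * ∏ i ∈ Finset.Ico 1 l, (pC (n + i) + pC i) := by
  intro l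
  induction l with
  | zero => omega
  | succ m ih =>
    intro _
    rcases Nat.eq_zero_or_pos m with hm | hm
    · subst hm
      rw [qC_eq]
      simp only [Finset.Ico_self, Finset.prod_empty, mul_one]
      have : 1 + n = n + 1 := by omega
      rw [this, pC_succ]
      have : pC 1 = X := by rw [show (1:ℕ) = 0 + 1 from rfl, pC_succ, pC_zero]; ring
      rw [this]; ring
    · have hstep : qC (m + 1) n = qC m n * (pC (n + m) + pC m) := by
        rw [qC_eq, qC_eq]
        have e1 : m + 1 + n = (m + n) + 1 := by omega
        have e2 : n + m = m + n := by omega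
        rw [e1, pC_succ, pC_succ, e2]
        ring
      rw [hstep, ih hm, Finset.prod_Ico_succ_top hm]
      ring

/-! ### Orbit sequences -/

noncomputable def orb (c : ℂ) (m : ℕ) : ℂ := (pC m).eval c
noncomputable def dorb (c : ℂ) (m : ℕ) : ℂ := (derivative (pC m)).eval c

lemma orb_zero (c : ℂ) : orb c 0 = 0 := by simp [orb, pC_zero]
lemma orb_succ (c : ℂ) (m : ℕ) : orb c (m + 1) = orb c m ^ 2 + c := by
  simp [orb, pC_succ]

lemma dorb_zero (c : ℂ) : dorb c 0 = 0 := by simp [dorb, pC_zero]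
lemma dorb_succ (c : ℂ) (m : ℕ) : dorb c (m + 1) = 2 * orb c m * dorb c m + 1 := by
  simp only [dorb, orb, pC_succ, derivative_add, derivative_X, derivative_pow]
  simp


lemma qC_eval (l n : ℕ) (c : ℂ) : (qC l n).eval c = orb c (l + n) - orb c l := by
  rw [qC_eq]; simp [orb]

/-- Once two values of the orbit agree, they keep agreeing. -/
lemma orb_shift {c : ℂ} {s t : ℕ} (h : orb c s = orb c t) (r : ℕ) :
    orb c (s + r) = orb c (t + r) := by
  induction r with
  | zero => simpa using h
  | succ u ih =>
    have e1 : s + (u + 1) = (s + u) + 1 := by omega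
    have e2 : t + (u + 1) = (t + u) + 1 := by omega
    rw [e1, e2, orb_succ, orb_succ, ih]

def IsPer (c : ℂ) (m t : ℕ) : Prop := ∀ m', m ≤ m' → orb c (m' + t) = orb c m'

lemma isPer_of_eq {c : ℂ} {m t : ℕ} (h : orb c (m + t) = orb c m) : IsPer c m t := by
  intro m' hm'
  obtain ⟨r, rfl⟩ := Nat.exists_eq_add_of_le hm'
  have := orb_shift h r
  have e : m + t + r = m + r + t := by omega
  rwa [e] at this

lemma IsPer.zero (c : ℂ) (m : ℕ) : IsPer c m 0 := fun m' _ => by simp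

lemma IsPer.mul {c : ℂ} {m t : ℕ} (h : IsPer c m t) (s : ℕ) : IsPer c m (s * t) := by
  induction s with
  | zero => simpa using IsPer.zero c m
  | succ u ih =>
    intro m' hm'
    have e : m' + (u + 1) * t = (m' + u * t) + t := by ring
    rw [e, h _ (by omega), ih _ hm']

lemma IsPer.mod {c : ℂ} {m t s : ℕ} (ht : IsPer c m t) (hs : IsPer c m s) :
    IsPer c m (t % s) := by
  intro m' hm'
  have h1 := (hs.mul (t / s)) (m' + t % s) (by omega)
  have e : m' + t % s + t / s * s = m' + t := by
    rw [add_assoc, Nat.mod_add_div']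
  rw [e] at h1
  rw [← h1]
  exact ht _ hm'

lemma IsPer.gcd {c : ℂ} {m : ℕ} :
    ∀ {t s : ℕ}, IsPer c m t → IsPer c m s → IsPer c m (Nat.gcd t s) := by
  intro t s
  induction t, s using Nat.gcd.induction with
  | H0 s => intro _ hs; simpa using hs
  | H1 t s ht ih =>
    intro hpt hps
    rw [Nat.gcd_rec]
    exact ih (hps.mod hpt) hpt

/-- minimal return times divide all return times -/
lemma return_dvd {c : ℂ} {m t : ℕ} (h0 : 0 < t) (ht : orb c (m + t) = orb c m)
    (hmin : ∀ u, 0 < u → u < t → orb c (m + u) ≠ orb c m)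
    {s : ℕ} (hs : orb c (m + s) = orb c m) : t ∣ s := by
  rcases Nat.eq_zero_or_pos s with rfl | hs0
  · exact Dvd.intro 0 rfl
  have hg : IsPer c m (Nat.gcd t s) := IsPer.gcd (isPer_of_eq ht) (isPer_of_eq hs)
  have hgpos : 0 < Nat.gcd t s := Nat.gcd_pos_of_pos_left _ h0
  have hgle : Nat.gcd t s ≤ t := Nat.le_of_dvd h0 (Nat.gcd_dvd_left _ _)
  rcases lt_or_eq_of_le hgle with hlt | heq
  · exact absurd (hg m le_rfl) (hmin _ hgpos hlt)
  · rw [← heq]; exact Nat.gcd_dvd_right _ _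

/-! ### Structure of hyperbolic centers -/

lemma hyp_mem {k : ℕ} {c : ℂ} (hc : c ∈ hyp k) :
    orb c k = 0 ∧ ∀ k' : ℕ, k' ∣ k → k' ≠ k → orb c k' ≠ 0 := hc

lemma hyp_orb_zero_iff {k : ℕ} (hk : k ≠ 0) {c : ℂ} (hc : c ∈ hyp k) (t : ℕ) :
    orb c t = 0 ↔ k ∣ t := by
  obtain ⟨h0, hdiv⟩ := hyp_mem hc
  constructor
  · intro hz
    have ht : orb c (0 + t) = orb c 0 := by simpa [orb_zero] using hz
    have hkk : orb c (0 + k) = orb c 0 := by simpa [orb_zero] using h0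
    have hg : IsPer c 0 (Nat.gcd k t) := IsPer.gcd (isPer_of_eq hkk) (isPer_of_eq ht)
    have hgz : orb c (Nat.gcd k t) = 0 := by
      have := hg 0 le_rfl
      simpa [orb_zero] using this
    have : Nat.gcd k t = k := by
      by_contra hne
      exact hdiv _ (Nat.gcd_dvd_left _ _) hne hgz
    rw [← this]
    exact Nat.gcd_dvd_right _ _
  · rintro ⟨u, rfl⟩
    have hkk : IsPer c 0 k := isPer_of_eq (by simpa [orb_zero] using h0)
    have := (hkk.mul u) 0 le_rfl
    simpa [orb_zero, mul_comm] using this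

/-- global periodicity at a hyperbolic center -/
lemma hyp_per {k : ℕ} {c : ℂ} (hc : c ∈ hyp k) {s : ℕ} (hks : k ∣ s) (t : ℕ) :
    orb c (t + s) = orb c t := by
  obtain ⟨u, rfl⟩ := hks
  have hkk : IsPer c 0 k := isPer_of_eq (by simpa [orb_zero] using (hyp_mem hc).1)
  have := (hkk.mul u) t (Nat.zero_le t)
  rwa [mul_comm] at this

/-! ### The prime over 2 and Gleason-type arguments -/

lemma derivP_succ (n : ℕ) :
    derivative (P (n + 1)) = 2 * (P n * derivative (P n)) + 1 := by
  rw [P_succ]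
  simp only [derivative_add, derivative_X, derivative_pow]
  rw [C_eq_natCast]
  push_cast
  ring

lemma pC_eval_eq_aeval (m : ℕ) (c : ℂ) : (pC m).eval c = aeval c (P m) := by
  rw [pC, aeval_def, eval_map]
  rfl

lemma exists_prime_over_two {c : ℂ} (hc : IsIntegral ℤ c) :
    ∃ Pid : Ideal (Algebra.adjoin ℤ ({c} : Set ℂ)), Pid.IsPrime ∧ (2 : _) ∈ Pid := by
  have hint : Algebra.IsIntegral ℤ (Algebra.adjoin ℤ ({c} : Set ℂ)) :=
    Algebra.IsIntegral.adjoin (by rintro x rfl; exact hc)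
  have h2 : (Ideal.span {(2 : ℤ)}).IsPrime := by
    rw [Ideal.span_singleton_prime (by norm_num)]
    exact Int.prime_two
  have hker : RingHom.ker (algebraMap ℤ (Algebra.adjoin ℤ ({c} : Set ℂ))) ≤
      Ideal.span {(2 : ℤ)} := by
    intro x hx
    have : (algebraMap ℤ (Algebra.adjoin ℤ ({c} : Set ℂ))) x = 0 := hx
    have hxz : (x : ℤ) = 0 := by
      have hinj : Function.Injective (algebraMap ℤ (Algebra.adjoin ℤ ({c} : Set ℂ))) := by
        intro a b hab
        have : ((algebraMap ℤ (Algebra.adjoin ℤ ({c} : Set ℂ)) a : _) : ℂ) =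
            ((algebraMap ℤ (Algebra.adjoin ℤ ({c} : Set ℂ)) b : _) : ℂ) := by rw [hab]
        simpa using this
      have hx0 : (algebraMap ℤ (Algebra.adjoin ℤ ({c} : Set ℂ))) x =
          (algebraMap ℤ (Algebra.adjoin ℤ ({c} : Set ℂ))) 0 := by simpa using this
      exact hinj hx0
    simp [hxz]
  obtain ⟨Qid, hQ, hcomap⟩ :=
    Ideal.exists_ideal_over_prime_of_isIntegral_of_isDomain (S := Algebra.adjoin ℤ ({c} : Set ℂ))
      (Ideal.span {(2 : ℤ)}) hker
  refine ⟨Qid, hQ, ?_⟩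
  have h2mem : (2 : ℤ) ∈ Ideal.comap (algebraMap ℤ (Algebra.adjoin ℤ ({c} : Set ℂ))) Qid := by
    rw [hcomap]
    exact Ideal.subset_span rfl
  have : (algebraMap ℤ (Algebra.adjoin ℤ ({c} : Set ℂ))) 2 ∈ Qid := h2mem
  simpa using this

/-! ### evaluation in the adjoined subalgebra -/

noncomputable def aR (c : ℂ) (m : ℕ) : Algebra.adjoin ℤ ({c} : Set ℂ) :=
  aeval (⟨c, Algebra.self_mem_adjoin_singleton ℤ c⟩ : Algebra.adjoin ℤ ({c} : Set ℂ)) (P m)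

noncomputable def dR (c : ℂ) (m : ℕ) : Algebra.adjoin ℤ ({c} : Set ℂ) :=
  aeval (⟨c, Algebra.self_mem_adjoin_singleton ℤ c⟩ : Algebra.adjoin ℤ ({c} : Set ℂ))
    (derivative (P m))

lemma coe_aR (c : ℂ) (m : ℕ) : ((aR c m : Algebra.adjoin ℤ ({c} : Set ℂ)) : ℂ) = orb c m := by
  rw [aR, Polynomial.coe_aeval_mk_apply, orb, pC_eval_eq_aeval]

lemma coe_dR (c : ℂ) (m : ℕ) : ((dR c m : Algebra.adjoin ℤ ({c} : Set ℂ)) : ℂ) = dorb c m := by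
  rw [dR, Polynomial.coe_aeval_mk_apply, dorb, pC]
  rw [derivative_map, aeval_def, eval_map]
  rfl

lemma aR_zero (c : ℂ) : aR c 0 = 0 := by simp [aR, P_zero]
lemma dR_zero (c : ℂ) : dR c 0 = 0 := by simp [dR, P_zero]

lemma aR_succ (c : ℂ) (m : ℕ) :
    aR c (m + 1) = aR c m ^ 2 + ⟨c, Algebra.self_mem_adjoin_singleton ℤ c⟩ := by
  simp [aR, P_succ, map_add, map_pow]

lemma dR_succ (c : ℂ) (m : ℕ) :
    dR c (m + 1) = 2 * (aR c m * dR c m) + 1 := by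
  rw [dR, derivP_succ, map_add, map_mul, map_mul, map_one, map_ofNat]
  rfl

lemma subalg_coe_inj {c : ℂ} {a b : Algebra.adjoin ℤ ({c} : Set ℂ)}
    (h : (a : ℂ) = (b : ℂ)) : a = b := Subtype.ext h

/-- Gleason: roots of `P k` are simple. -/
lemma gleason {k : ℕ} (hk : k ≠ 0) {c : ℂ} (h0 : (pC k).eval c = 0) :
    (derivative (pC k)).eval c ≠ 0 := by
  intro hd
  have hint : IsIntegral ℤ c := ⟨P k, (P_monic hk).1, by
    rw [← aeval_def, ← pC_eval_eq_aeval]; exact h0⟩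
  obtain ⟨Pid, hprime, h2⟩ := exists_prime_over_two hint
  obtain ⟨k', rfl⟩ : ∃ k', k = k' + 1 := ⟨k - 1, by omega⟩
  have hdz : dR c (k' + 1) = 0 := by
    apply subalg_coe_inj
    rw [coe_dR]
    simpa [dorb] using hd
  rw [dR_succ] at hdz
  have hone : (1 : Algebra.adjoin ℤ ({c} : Set ℂ)) ∈ Pid := by
    have : (1 : Algebra.adjoin ℤ ({c} : Set ℂ)) = -(2 * (aR c k' * dR c k')) := by
      linear_combination hdz
    rw [this]
    exact Submodule.neg_mem _ (Ideal.mul_mem_right _ _ h2)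
  exact hprime.ne_top (Ideal.eq_top_of_isUnit_mem _ hone isUnit_one)

/-- at a hyperbolic center, the derivative sequence is periodic on multiples of `k`. -/
lemma dorb_center {k : ℕ} (hk : k ≠ 0) {c : ℂ} (hc : c ∈ hyp k) {m : ℕ} (hm : k ∣ m)
    (hm0 : m ≠ 0) : dorb c m = dorb c k := by
  -- first: for any multiple m' of k and 1 ≤ s, dorb (m' + s) = dorb s
  have key : ∀ m' : ℕ, k ∣ m' → ∀ s : ℕ, 1 ≤ s → dorb c (m' + s) = dorb c s := by
    intro m' hm' s hs
    induction s with
    | zero => omega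
    | succ u ih =>
      rcases Nat.eq_zero_or_pos u with hu | hu
      · subst hu
        rw [dorb_succ, dorb_succ]
        have hz : orb c m' = 0 := (hyp_orb_zero_iff hk hc m').2 hm'
        rw [hz, orb_zero]
        ring
      · have e : m' + (u + 1) = (m' + u) + 1 := by omega
        rw [e, dorb_succ, dorb_succ, ih (by omega)]
        have : orb c (m' + u) = orb c u := by
          have := hyp_per hc hm' u
          rwa [add_comm] at this
        rw [this]
  obtain ⟨v, rfl⟩ := hm
  have hv : v ≠ 0 := by rintro rfl; simp at hm0
  obtain ⟨w, rfl⟩ : ∃ w, v = w + 1 := ⟨v - 1, by omega⟩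
  have e : k * (w + 1) = k * w + k := by ring
  rw [e, key (k * w) ⟨w, rfl⟩ k (by omega)]

/-! ### Structure at Misiurewicz points -/

lemma mis_spec {c : ℂ} {j k : ℕ} (hc : c ∈ mis j k) :
    orb c (j + k) = orb c j ∧ orb c ((j - 1) + k) ≠ orb c (j - 1) ∧
      ∀ k' : ℕ, k' ∣ k → k' ≠ k → orb c (j + k') ≠ orb c j := by
  obtain ⟨h1, h2, h3⟩ := hc
  rw [qC_eval] at h1 h2
  refine ⟨sub_eq_zero.mp h1, ?_, ?_⟩
  · intro h
    exact h2 (by rw [h, sub_self])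
  · intro k' hd hne h
    exact h3 k' hd hne (by rw [qC_eval, h, sub_self])

lemma mis_tail_per {c : ℂ} {j k : ℕ} (hc : c ∈ mis j k) : IsPer c j k :=
  isPer_of_eq (mis_spec hc).1

lemma mis_per_dvd {c : ℂ} {j k : ℕ} (hc : c ∈ mis j k) {s : ℕ} (hs : k ∣ s)
    {m : ℕ} (hm : j ≤ m) : orb c (m + s) = orb c m := by
  obtain ⟨u, rfl⟩ := hs
  have := ((mis_tail_per hc).mul u) m hm
  rwa [mul_comm] at this

lemma mis_n_ne {c : ℂ} {j k n : ℕ} (hn : n ≠ 0) (hkn : k ∣ n) (hc : c ∈ mis j k) :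
    orb c ((j - 1) + n) ≠ orb c (j - 1) := by
  intro h
  have hpn : IsPer c (j - 1) n := isPer_of_eq h
  have e1 : orb c (((j - 1) + k) + n) = orb c ((j - 1) + k) := hpn _ (by omega)
  have e2 : ((j - 1) + k) + n = ((j - 1) + n) + k := by omega
  have e3 : orb c (((j - 1) + n) + k) = orb c ((j - 1) + n) :=
    (mis_tail_per hc) _ (by omega)
  rw [e2, e3, h] at e1
  exact (mis_spec hc).2.1 e1.symm

lemma mis_neg {c : ℂ} {j k n : ℕ} (hj : 2 ≤ j) (hn : n ≠ 0) (hkn : k ∣ n) (hc : c ∈ mis j k) :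
    orb c ((j - 1) + n) = -orb c (j - 1) ∧ orb c (j - 1) ≠ 0 := by
  have hsq : orb c ((j - 1) + n) ^ 2 = orb c (j - 1) ^ 2 := by
    have e1 : orb c (((j - 1) + n) + 1) = orb c ((j - 1) + n) ^ 2 + c := orb_succ c _
    have e2 : ((j - 1) + n) + 1 = j + n := by omega
    have e3 : orb c (j + n) = orb c j := mis_per_dvd hc hkn le_rfl
    have e4 : orb c j = orb c (j - 1) ^ 2 + c := by
      have h6 := orb_succ c (j - 1)
      rw [show (j - 1) + 1 = j by omega] at h6
      exact h6
    rw [e2, e3, e4] at e1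
    linear_combination -e1
  have hne := mis_n_ne hn hkn hc
  have hfac : (orb c ((j - 1) + n) - orb c (j - 1)) * (orb c ((j - 1) + n) + orb c (j - 1)) = 0 := by
    linear_combination hsq
  rcases mul_eq_zero.mp hfac with h | h
  · exact absurd (sub_eq_zero.mp h) hne
  · have h1 : orb c ((j - 1) + n) = -orb c (j - 1) := by linear_combination h
    refine ⟨h1, fun h0 => ?_⟩
    rw [h0] at h1
    simp only [neg_zero] at h1
    exact hne (h1.trans h0.symm)

lemma mis_orb_ne_zero {c : ℂ} {j k : ℕ} (hk : k ≠ 0) (hc : c ∈ mis j k) :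
    ∀ i, i ≠ 0 → orb c i ≠ 0 := by
  intro i hi h0
  have hglob : IsPer c 0 i := isPer_of_eq (by simpa [orb_zero] using h0)
  have rlem : ∀ r, 1 ≤ r → orb c ((j - 1) + r * k) = orb c ((j - 1) + k) := by
    intro r
    induction r with
    | zero => omega
    | succ u ih =>
      intro _
      rcases Nat.eq_zero_or_pos u with hu | hu
      · subst hu; norm_num
      · have e : (j - 1) + (u + 1) * k = ((j - 1) + u * k) + k := by ring
        rw [e]
        rw [(mis_tail_per hc) _ (by
          have : 1 * k ≤ u * k := Nat.mul_le_mul_right k hu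
          omega)]
        exact ih hu
  have h1 : orb c ((j - 1) + i * k) = orb c ((j - 1) + k) := rlem i (by omega)
  have h2 : orb c ((j - 1) + k * i) = orb c (j - 1) := (hglob.mul k) _ (Nat.zero_le _)
  rw [mul_comm] at h2
  rw [h2] at h1
  exact (mis_spec hc).2.1 h1.symm

lemma mis_g_lt {c : ℂ} {j k n : ℕ} (hn : n ≠ 0) (hkn : k ∣ n) (hc : c ∈ mis j k)
    {i : ℕ} (hi1 : i + 1 < j) : orb c (n + i) + orb c i ≠ 0 := by
  intro h
  have h1 : orb c (n + i) = -orb c i := by linear_combination h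
  have h2 : orb c ((i + 1) + n) = orb c (i + 1) := by
    have e1 : orb c ((n + i) + 1) = orb c (n + i) ^ 2 + c := orb_succ c _
    have e2 : (n + i) + 1 = (i + 1) + n := by omega
    rw [e2, h1] at e1
    rw [e1, orb_succ]
    ring
  have hper : IsPer c (i + 1) n := isPer_of_eq h2
  exact mis_n_ne hn hkn hc (hper (j - 1) (by omega))

lemma mis_g_ge {c : ℂ} {j k n : ℕ} (hj : 2 ≤ j) (hk : k ≠ 0) (hkn : k ∣ n) (hc : c ∈ mis j k)
    {i : ℕ} (hi : j ≤ i) : orb c (n + i) + orb c i ≠ 0 := by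
  have h1 : orb c (n + i) = orb c i := by
    have := mis_per_dvd hc hkn hi
    rwa [add_comm] at this
  rw [h1]
  intro h
  have h4 : orb c i = 0 := by linear_combination h / 2
  exact mis_orb_ne_zero hk hc i (by omega) h4

lemma mis_transversal {c : ℂ} {j k n : ℕ} (hj : 2 ≤ j) (hk : k ≠ 0) (hkn : k ∣ n) (hn : n ≠ 0)
    (hc : c ∈ mis j k) (hint : IsIntegral ℤ c) :
    dorb c (n + (j - 1)) + dorb c (j - 1) ≠ 0 := by
  intro hD
  obtain ⟨Pid, hprime, h2⟩ := exists_prime_over_two hint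
  obtain ⟨s, hs⟩ : ∃ s, j = s + 2 := ⟨j - 2, by omega⟩
  subst hs
  have ej : (s + 2) - 1 = s + 1 := by omega
  rw [ej] at hD
  have en : n + (s + 1) = (n + s) + 1 := by omega
  rw [en] at hD
  -- u = -1 in ℂ
  have hu : orb c (n + s) * dorb c (n + s) + orb c s * dorb c s = -1 := by
    rw [dorb_succ, dorb_succ] at hD
    linear_combination hD / 2
  set x : Algebra.adjoin ℤ ({c} : Set ℂ) := ⟨c, Algebra.self_mem_adjoin_singleton ℤ c⟩ with hx
  have huR : aR c (n + s) * dR c (n + s) + aR c s * dR c s = -1 := by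
    apply subalg_coe_inj
    push_cast [coe_aR, coe_dR]
    simpa using hu
  have hA : aR c (n + s) ^ 2 + aR c s ^ 2 + x + x = 0 := by
    have h5 := (mis_neg (c := c) (j := s + 2) (k := k) (n := n) (by omega) hn hkn hc).1
    rw [ej] at h5
    have e5 : (s + 1) + n = (n + s) + 1 := by omega
    rw [e5] at h5
    -- in ℂ : orb ((n+s)+1) + orb (s+1) = 0
    apply subalg_coe_inj
    have hC : orb c ((n + s) + 1) + orb c (s + 1) = 0 := by rw [h5]; ring
    rw [orb_succ, orb_succ] at hC
    push_cast [coe_aR]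
    linear_combination hC
  have humem : aR c (n + s) * dR c (n + s) + aR c s * dR c s ∈ Pid := by
    rcases Nat.eq_zero_or_pos s with hs0 | hs0
    · subst hs0
      simp only [Nat.add_zero] at hA ⊢
      have hAn : aR c n ^ 2 ∈ Pid := by
        have : aR c n ^ 2 = -(2 * x) + -(aR c 0 ^ 2) := by linear_combination hA
        rw [this, aR_zero]
        have : -(2 * x) + -(0 : Algebra.adjoin ℤ ({c} : Set ℂ)) ^ 2 = (-x) * 2 := by ring
        rw [this]
        exact Ideal.mul_mem_left _ _ h2
      have hAn' : aR c n ∈ Pid := hprime.mem_of_pow_mem 2 hAn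
      have : aR c n * dR c n + aR c 0 * dR c 0 =
          dR c n * aR c n := by rw [aR_zero]; ring
      rw [this]
      exact Ideal.mul_mem_left _ _ hAn'
    · obtain ⟨s', rfl⟩ : ∃ s', s = s' + 1 := ⟨s - 1, by omega⟩
      have hdiff : dR c (n + (s' + 1)) - dR c (s' + 1) =
          (aR c (n + s') * dR c (n + s') - aR c s' * dR c s') * 2 := by
        have e : n + (s' + 1) = (n + s') + 1 := by omega
        rw [e, dR_succ, dR_succ]
        ring
      have mem1 : dR c (n + (s' + 1)) - dR c (s' + 1) ∈ Pid := by
        rw [hdiff]; exact Ideal.mul_mem_left _ _ h2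
      have mem2 : aR c (n + (s' + 1)) + aR c (s' + 1) ∈ Pid := by
        apply hprime.mem_of_pow_mem 2
        have : (aR c (n + (s' + 1)) + aR c (s' + 1)) ^ 2 =
            (-x + aR c (n + (s' + 1)) * aR c (s' + 1)) * 2 := by
          linear_combination hA
        rw [this]
        exact Ideal.mul_mem_left _ _ h2
      have : aR c (n + (s' + 1)) * dR c (n + (s' + 1)) + aR c (s' + 1) * dR c (s' + 1) =
          aR c (n + (s' + 1)) * (dR c (n + (s' + 1)) - dR c (s' + 1)) +
            (aR c (n + (s' + 1)) + aR c (s' + 1)) * dR c (s' + 1) := by ring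
      rw [this]
      exact Ideal.add_mem _ (Ideal.mul_mem_left _ _ mem1) (Ideal.mul_mem_right _ _ mem2)
  rw [huR] at humem
  have hone : (1 : Algebra.adjoin ℤ ({c} : Set ℂ)) ∈ Pid := by
    have : (1 : Algebra.adjoin ℤ ({c} : Set ℂ)) = -(-1) := by ring
    rw [this]
    exact Submodule.neg_mem _ humem
  exact hprime.ne_top (Ideal.eq_top_of_isUnit_mem _ hone isUnit_one)

/-! ### Covering: every root of `qC l n` is a center or a Misiurewicz point -/

lemma cover {l n : ℕ} (hn : n ≠ 0) {c : ℂ} (hroot : (qC l n).eval c = 0) :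
    (∃ k, k ∣ n ∧ k ≠ 0 ∧ c ∈ hyp k) ∨
      (∃ j k, 2 ≤ j ∧ j ≤ l ∧ k ∣ n ∧ k ≠ 0 ∧ c ∈ mis j k) := by
  classical
  have hrt : orb c (l + n) = orb c l := by
    rw [qC_eval] at hroot
    exact sub_eq_zero.mp hroot
  have hex : ∃ m, orb c (m + n) = orb c m := ⟨l, hrt⟩
  set j0 := Nat.find hex with hj0def
  have hspec : orb c (j0 + n) = orb c j0 := Nat.find_spec hex
  have hj0l : j0 ≤ l := Nat.find_min' hex hrt
  by_cases hj0 : j0 = 0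
  · -- hyperbolic center
    left
    have hzn : orb c n = 0 := by
      have := hspec
      rw [hj0] at this
      simpa [orb_zero] using this
    have hex2 : ∃ t, 0 < t ∧ orb c t = 0 := ⟨n, Nat.pos_of_ne_zero hn, hzn⟩
    set k := Nat.find hex2 with hkdef
    obtain ⟨hkpos, hkz⟩ : 0 < k ∧ orb c k = 0 := Nat.find_spec hex2
    have hkmin : ∀ u, 0 < u → u < k → orb c u ≠ 0 := by
      intro u hu hul hz
      exact Nat.find_min hex2 hul ⟨hu, hz⟩
    have hkn : k ∣ n := by
      refine return_dvd (m := 0) (c := c) hkpos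
        (show orb c (0 + k) = orb c 0 by simpa [orb_zero] using hkz)
        (fun u hu hul => show orb c (0 + u) ≠ orb c 0 by
          simpa [orb_zero] using hkmin u hu hul)
        (show orb c (0 + n) = orb c 0 by simpa [orb_zero] using hzn)
    refine ⟨k, hkn, by omega, ?_, ?_⟩
    · exact hkz
    · intro k' hd hne
      have hk'pos : 0 < k' := by
        rcases Nat.eq_zero_or_pos k' with rfl | h
        · exact absurd (Nat.eq_zero_of_zero_dvd hd) (by omega)
        · exact h
      have hk'lt : k' < k := Nat.lt_of_le_of_ne (Nat.le_of_dvd hkpos hd) hne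
      exact hkmin k' hk'pos hk'lt
  · -- Misiurewicz point
    right
    have hj1 : orb c ((j0 - 1) + n) ≠ orb c (j0 - 1) := Nat.find_min hex (by omega)
    have hj2 : 2 ≤ j0 := by
      by_contra hcon
      have hj01 : j0 = 1 := by omega
      have h1 : orb c (1 + n) = orb c 1 := by rw [← hj01]; exact hspec
      have e1 : orb c (1 + n) = orb c n ^ 2 + c := by
        rw [show 1 + n = n + 1 by omega, orb_succ]
      have e2 : orb c 1 = c := by
        rw [show (1 : ℕ) = 0 + 1 from rfl, orb_succ, orb_zero]
        ring
      have hzn : orb c n = 0 := by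
        have : orb c n ^ 2 = 0 := by
          rw [e1, e2] at h1
          linear_combination h1
        exact pow_eq_zero_iff (by norm_num) |>.mp this
      have : j0 ≤ 0 := Nat.find_min' hex (by simpa [orb_zero] using hzn)
      omega
    have hex3 : ∃ t, 0 < t ∧ orb c (j0 + t) = orb c j0 :=
      ⟨n, Nat.pos_of_ne_zero hn, hspec⟩
    obtain ⟨k, hkpos, hkret, hkmin⟩ :
        ∃ k, 0 < k ∧ orb c (j0 + k) = orb c j0 ∧
          ∀ u, 0 < u → u < k → orb c (j0 + u) ≠ orb c j0 := by
      refine ⟨Nat.find hex3, (Nat.find_spec hex3).1, (Nat.find_spec hex3).2, ?_⟩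
      intro u hu hul hz
      exact Nat.find_min hex3 hul ⟨hu, hz⟩
    have hkn : k ∣ n := return_dvd hkpos hkret hkmin hspec
    refine ⟨j0, k, hj2, hj0l, hkn, by omega, ?_, ?_, ?_⟩
    · rw [qC_eval, hkret, sub_self]
    · rw [qC_eval]
      intro hz
      have heq : orb c ((j0 - 1) + k) = orb c (j0 - 1) := sub_eq_zero.mp hz
      obtain ⟨u, rfl⟩ := hkn
      have := (isPer_of_eq heq).mul u (j0 - 1) le_rfl
      rw [mul_comm] at this
      exact hj1 this
    · intro k' hd hne
      rw [qC_eval]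
      intro hz
      have hk'pos : 0 < k' := by
        rcases Nat.eq_zero_or_pos k' with rfl | h
        · exact absurd (Nat.eq_zero_of_zero_dvd hd) (by omega)
        · exact h
      have hk'lt : k' < k := Nat.lt_of_le_of_ne (Nat.le_of_dvd hkpos hd) hne
      exact hkmin k' hk'pos hk'lt (sub_eq_zero.mp hz)

/-! ### Disjointness -/

lemma hyp_unique {c : ℂ} {k k' : ℕ} (hk : k ≠ 0) (hk' : k' ≠ 0)
    (h : c ∈ hyp k) (h' : c ∈ hyp k') : k = k' := by
  have h1 : k ∣ k' := (hyp_orb_zero_iff hk h k').mp (hyp_mem h').1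
  have h2 : k' ∣ k := (hyp_orb_zero_iff hk' h' k).mp (hyp_mem h).1
  exact Nat.dvd_antisymm h1 h2

lemma hyp_mis_disjoint {c : ℂ} {k j' k' : ℕ} (hk : k ≠ 0) (hk' : k' ≠ 0)
    (hh : c ∈ hyp k) (hm : c ∈ mis j' k') : False := by
  have e1 : orb c (((j' - 1) + k') + k) = orb c ((j' - 1) + k') := hyp_per hh dvd_rfl _
  have e2 : ((j' - 1) + k') + k = ((j' - 1) + k) + k' := by omega
  have e3 : orb c (((j' - 1) + k) + k') = orb c ((j' - 1) + k) :=
    (mis_tail_per hm) _ (by omega)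
  have e4 : orb c ((j' - 1) + k) = orb c (j' - 1) := hyp_per hh dvd_rfl _
  rw [e2, e3, e4] at e1
  exact (mis_spec hm).2.1 e1.symm

lemma mis_unique {c : ℂ} {j k j' k' n : ℕ} (hn : n ≠ 0)
    (hk : k ≠ 0) (hk' : k' ≠ 0) (hkn : k ∣ n) (hk'n : k' ∣ n)
    (hm : c ∈ mis j k) (hm' : c ∈ mis j' k') : j = j' ∧ k = k' := by
  have hjj : j = j' := by
    by_contra hne
    rcases Nat.lt_or_ge j j' with hlt | hge
    · exact mis_n_ne hn hk'n hm' (mis_per_dvd hm hkn (by omega))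
    · have hlt : j' < j := by omega
      exact mis_n_ne hn hkn hm (mis_per_dvd hm' hk'n (by omega))
  subst hjj
  have hg : IsPer c j (Nat.gcd k k') := IsPer.gcd (mis_tail_per hm) (mis_tail_per hm')
  have hgret : orb c (j + Nat.gcd k k') = orb c j := hg j le_rfl
  have hgk : Nat.gcd k k' = k := by
    by_contra hne
    exact (mis_spec hm).2.2 _ (Nat.gcd_dvd_left _ _) hne hgret
  have hgk' : Nat.gcd k k' = k' := by
    by_contra hne
    exact (mis_spec hm').2.2 _ (Nat.gcd_dvd_right _ _) hne hgret
  exact ⟨rfl, hgk.symm.trans hgk'⟩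

/-! ### Root multiplicities -/

lemma rm_eq_one {p : Polynomial ℂ} {z : ℂ} (hp : p ≠ 0) (h0 : p.eval z = 0)
    (h1 : (derivative p).eval z ≠ 0) : rootMultiplicity z p = 1 := by
  have hpos : 0 < rootMultiplicity z p := (rootMultiplicity_pos hp).mpr h0
  by_contra hne
  have h2 : 2 ≤ rootMultiplicity z p := by omega
  have hdvd : (X - C z) ^ 2 ∣ p :=
    dvd_trans (pow_dvd_pow _ h2) (pow_rootMultiplicity_dvd p z)
  obtain ⟨g, hg⟩ := hdvd
  apply h1
  rw [hg]
  simp [derivative_mul, derivative_pow]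

lemma rm_prod {ι : Type*} {z : ℂ} {s : Finset ι} {f : ι → Polynomial ℂ}
    (h : (∏ i ∈ s, f i) ≠ 0) :
    rootMultiplicity z (∏ i ∈ s, f i) = ∑ i ∈ s, rootMultiplicity z (f i) := by
  classical
  induction s using Finset.cons_induction with
  | empty =>
    simp only [Finset.prod_empty, Finset.sum_empty]
    exact rootMultiplicity_eq_zero (by simp [IsRoot])
  | cons a s ha ih =>
    rw [Finset.prod_cons] at h ⊢
    rw [Polynomial.rootMultiplicity_mul h, Finset.sum_cons,
      ih (right_ne_zero_of_mul h)]

lemma hyp_is_root {k n l : ℕ} (hkn : k ∣ n) {c : ℂ} (hc : c ∈ hyp k) :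
    (qC l n).eval c = 0 := by
  rw [qC_eval, hyp_per hc hkn l, sub_self]

lemma mis_is_root {j k n l : ℕ} (hjl : j ≤ l) (hkn : k ∣ n) {c : ℂ} (hc : c ∈ mis j k) :
    (qC l n).eval c = 0 := by
  rw [qC_eval, mis_per_dvd hc hkn hjl, sub_self]

lemma rm_hyp {l n k : ℕ} (hl : 2 ≤ l) (hn : n ≠ 0) (hk : k ≠ 0) (hkn : k ∣ n)
    {c : ℂ} (hc : c ∈ hyp k) : rootMultiplicity c (qC l n) = eta l k := by
  have hfac := qC_factor (n := n) (l := l) (by omega)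
  have hq0 : qC l n ≠ 0 := qC_ne_zero hn
  rw [hfac] at hq0
  have hpow : pC n ^ 2 ≠ 0 := left_ne_zero_of_mul hq0
  have hprodne : (∏ i ∈ Finset.Ico 1 l, (pC (n + i) + pC i)) ≠ 0 := right_ne_zero_of_mul hq0
  have hdk : (derivative (pC k)).eval c ≠ 0 := gleason hk (hyp_mem hc).1
  have hrm1 : rootMultiplicity c (pC n) = 1 := by
    refine rm_eq_one (pC_ne_zero hn) ((hyp_orb_zero_iff hk hc n).mpr hkn) ?_
    have := dorb_center hk hc hkn hn
    rw [dorb] at this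
    rw [this]
    exact hdk
  have hfacrm : ∀ i ∈ Finset.Ico 1 l,
      rootMultiplicity c (pC (n + i) + pC i) = if k ∣ i then 1 else 0 := by
    intro i hi
    rw [Finset.mem_Ico] at hi
    have hfi : pC (n + i) + pC i ≠ 0 := by
      have := Finset.prod_ne_zero_iff.mp hprodne i (Finset.mem_Ico.mpr hi)
      exact this
    by_cases hki : k ∣ i
    · rw [if_pos hki]
      refine rm_eq_one hfi ?_ ?_
      · have e1 : orb c (n + i) = 0 := (hyp_orb_zero_iff hk hc _).mpr (dvd_add hkn hki)
        have e2 : orb c i = 0 := (hyp_orb_zero_iff hk hc _).mpr hki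
        rw [eval_add, show (pC (n+i)).eval c = orb c (n+i) from rfl,
          show (pC i).eval c = orb c i from rfl, e1, e2, add_zero]
      · rw [derivative_add, eval_add]
        have d1 : dorb c (n + i) = dorb c k :=
          dorb_center hk hc (dvd_add hkn hki) (by omega)
        have d2 : dorb c i = dorb c k := dorb_center hk hc hki (by omega)
        rw [show (derivative (pC (n+i))).eval c = dorb c (n+i) from rfl,
          show (derivative (pC i)).eval c = dorb c i from rfl, d1, d2]
        intro hcon
        apply hdk
        rw [show (derivative (pC k)).eval c = dorb c k from rfl]
        have : (2 : ℂ) * dorb c k = 0 := by linear_combination hcon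
        have h2 : (2 : ℂ) ≠ 0 := by norm_num
        exact (mul_eq_zero.mp this).resolve_left h2
    · rw [if_neg hki]
      apply rootMultiplicity_eq_zero
      intro hcon
      rw [IsRoot, eval_add] at hcon
      have e1 : orb c (n + i) = orb c i := by
        have := hyp_per hc hkn i
        rw [add_comm] at this
        exact this
      rw [show (pC (n+i)).eval c = orb c (n+i) from rfl,
        show (pC i).eval c = orb c i from rfl, e1] at hcon
      have : orb c i = 0 := by linear_combination hcon / 2
      exact hki ((hyp_orb_zero_iff hk hc i).mp this)
  rw [hfac, Polynomial.rootMultiplicity_mul hq0, rm_prod hprodne]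
  rw [show pC n ^ 2 = pC n * pC n from sq (pC n),
    Polynomial.rootMultiplicity_mul (by rw [← sq]; exact hpow), hrm1]
  rw [Finset.sum_congr rfl hfacrm]
  have hcount : ∑ i ∈ Finset.Ico 1 l, (if k ∣ i then 1 else 0) = (l - 1) / k := by
    rw [← Finset.sum_filter]
    simp only [Finset.sum_const, smul_eq_mul, mul_one]
    have : Finset.Ico 1 l = Finset.Ioc 0 (l - 1) := by
      ext x
      simp only [Finset.mem_Ico, Finset.mem_Ioc]
      omega
    rw [this]
    have := Nat.Ioc_filter_dvd_card_eq_div (l - 1) k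
    simpa using this
  rw [hcount, _root_.eta, if_neg (by omega : ¬ l = 0)]
  omega

lemma rm_mis {l n j k : ℕ} (hn : n ≠ 0) (hj : 2 ≤ j) (hjl : j ≤ l) (hk : k ≠ 0)
    (hkn : k ∣ n) {c : ℂ} (hc : c ∈ mis j k) (hint : IsIntegral ℤ c) :
    rootMultiplicity c (qC l n) = 1 := by
  have hfac := qC_factor (n := n) (l := l) (by omega)
  have hq0 : qC l n ≠ 0 := qC_ne_zero hn
  rw [hfac] at hq0
  have hpow : pC n ^ 2 ≠ 0 := left_ne_zero_of_mul hq0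
  have hprodne : (∏ i ∈ Finset.Ico 1 l, (pC (n + i) + pC i)) ≠ 0 := right_ne_zero_of_mul hq0
  have hrm0 : rootMultiplicity c (pC n ^ 2) = 0 := by
    apply rootMultiplicity_eq_zero
    intro hcon
    rw [IsRoot, eval_pow] at hcon
    have : orb c n = 0 := by
      have := pow_eq_zero_iff (n := 2) (by norm_num) |>.mp hcon
      exact this
    exact mis_orb_ne_zero hk hc n hn this
  have hfacrm : ∀ i ∈ Finset.Ico 1 l,
      rootMultiplicity c (pC (n + i) + pC i) = if i = j - 1 then 1 else 0 := by
    intro i hi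
    rw [Finset.mem_Ico] at hi
    have hfi : pC (n + i) + pC i ≠ 0 :=
      Finset.prod_ne_zero_iff.mp hprodne i (Finset.mem_Ico.mpr hi)
    by_cases hij : i = j - 1
    · rw [if_pos hij]
      subst hij
      refine rm_eq_one hfi ?_ ?_
      · rw [eval_add, show (pC (n+(j-1))).eval c = orb c (n+(j-1)) from rfl,
          show (pC (j-1)).eval c = orb c (j-1) from rfl]
        have := (mis_neg hj hn hkn hc).1
        rw [show n + (j-1) = (j-1) + n by omega, this]
        ring
      · rw [derivative_add, eval_add]
        exact mis_transversal hj hk hkn hn hc hint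
    · rw [if_neg hij]
      apply rootMultiplicity_eq_zero
      intro hcon
      rw [IsRoot, eval_add] at hcon
      rw [show (pC (n+i)).eval c = orb c (n+i) from rfl,
        show (pC i).eval c = orb c i from rfl] at hcon
      rcases Nat.lt_or_ge i (j - 1) with hlt | hge
      · exact mis_g_lt hn hkn hc (by omega) hcon
      · exact mis_g_ge hj hk hkn hc (by omega) hcon
  rw [hfac, Polynomial.rootMultiplicity_mul hq0, rm_prod hprodne, hrm0,
    Finset.sum_congr rfl hfacrm, Finset.sum_ite_eq' (Finset.Ico 1 l) (j - 1) (fun _ => 1),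
    if_pos (Finset.mem_Ico.mpr (by omega))]

/-! ### Assembly -/

theorem degree_identity' (l n : ℕ) (hl : 2 ≤ l) (hn : 1 ≤ n) :
    ∑ k ∈ n.divisors,
        (eta l k * (hyp k).ncard + ∑ j ∈ Finset.Icc 2 l, (mis j k).ncard) =
      2 ^ (l + n - 1) := by
  classical
  have hn0 : n ≠ 0 := by omega
  have hq0 : qC l n ≠ 0 := qC_ne_zero hn0
  have hdeg : (qC l n).natDegree = 2 ^ (l + n - 1) := qC_natDegree hn0
  have hsplits : Splits (qC l n) := IsAlgClosed.splits _
  have hcard : (qC l n).roots.card = (qC l n).natDegree := (splits_iff_card_roots).mp hsplits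
  set T := (qC l n).roots.toFinset with hT
  have hroot : ∀ z ∈ T, (qC l n).eval z = 0 := by
    intro z hz
    rw [hT, Multiset.mem_toFinset, mem_roots hq0] at hz
    exact hz
  have hint : ∀ z ∈ T, IsIntegral ℤ z := by
    intro z hz
    exact ⟨Q l n, (Q_monic hn0).1, by
      rw [← aeval_def] at *
      have : (qC l n).eval z = aeval z (Q l n) := by
        rw [qC, aeval_def, eval_map]; rfl
      rw [← this]
      exact hroot z hz⟩
  have hmemT_hyp : ∀ k ∈ n.divisors, ∀ z ∈ hyp k, z ∈ T := by
    intro k hk z hz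
    rw [hT, Multiset.mem_toFinset, mem_roots hq0]
    exact hyp_is_root (Nat.mem_divisors.mp hk).1 hz
  have hmemT_mis : ∀ k ∈ n.divisors, ∀ j ∈ Finset.Icc 2 l, ∀ z ∈ mis j k, z ∈ T := by
    intro k hk j hj z hz
    rw [hT, Multiset.mem_toFinset, mem_roots hq0]
    exact mis_is_root (Finset.mem_Icc.mp hj).2 (Nat.mem_divisors.mp hk).1 hz
  have hpoint : ∀ z ∈ T, rootMultiplicity z (qC l n) =
      ∑ k ∈ n.divisors, ((if z ∈ hyp k then eta l k else 0) +
        ∑ j ∈ Finset.Icc 2 l, (if z ∈ mis j k then 1 else 0)) := by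
    intro z hz
    rcases cover hn0 (hroot z hz) with ⟨k0, hk0n, hk00, hzk0⟩ |
      ⟨j0, k0, hj0, hj0l, hk0n, hk00, hzm⟩
    · rw [rm_hyp hl hn0 hk00 hk0n hzk0]
      rw [Finset.sum_eq_single k0]
      · rw [if_pos hzk0]
        have hzero : ∑ j ∈ Finset.Icc 2 l, (if z ∈ mis j k0 then 1 else 0) = 0 := by
          apply Finset.sum_eq_zero
          intro j hj
          rw [if_neg]
          intro hzm
          exact hyp_mis_disjoint hk00 hk00 hzk0 hzm
        rw [hzero, add_zero]
      · intro k hk hne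
        have hkpos : k ≠ 0 := (Nat.pos_of_mem_divisors hk).ne'
        have h1 : (if z ∈ hyp k then _root_.eta l k else 0) = 0 := by
          rw [if_neg]
          intro hzk
          exact hne (hyp_unique hkpos hk00 hzk hzk0)
        have h2 : ∑ j ∈ Finset.Icc 2 l, (if z ∈ mis j k then 1 else 0) = 0 := by
          apply Finset.sum_eq_zero
          intro j hj
          rw [if_neg]
          intro hzm
          exact hyp_mis_disjoint hk00 hkpos hzk0 hzm
        rw [h1, h2]
        norm_num

      · intro hk0
        exact absurd (Nat.mem_divisors.mpr ⟨hk0n, hn0⟩) hk0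
    · rw [rm_mis hn0 hj0 hj0l hk00 hk0n hzm (hint z hz)]
      rw [Finset.sum_eq_single k0]
      · rw [if_neg (fun hzk => hyp_mis_disjoint hk00 hk00 hzk hzm)]
        rw [Finset.sum_eq_single j0]
        · rw [if_pos hzm]
        · intro j hj hne
          rw [if_neg]
          intro hzm'
          exact hne (mis_unique hn0 hk00 hk00 hk0n hk0n hzm' hzm).1
        · intro habs
          exact absurd (Finset.mem_Icc.mpr ⟨hj0, hj0l⟩) habs
      · intro k hk hne
        have hkpos : k ≠ 0 := (Nat.pos_of_mem_divisors hk).ne'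
        have h1 : (if z ∈ hyp k then _root_.eta l k else 0) = 0 := by
          rw [if_neg]
          intro hzk
          exact hyp_mis_disjoint hkpos hk00 hzk hzm
        have h2 : ∑ j ∈ Finset.Icc 2 l, (if z ∈ mis j k then 1 else 0) = 0 := by
          apply Finset.sum_eq_zero
          intro j hj
          rw [if_neg]
          intro hzm'
          exact hne (mis_unique hn0 hkpos hk00 (Nat.mem_divisors.mp hk).1 hk0n hzm' hzm).2
        rw [h1, h2]
        norm_num

      · intro hk0
        exact absurd (Nat.mem_divisors.mpr ⟨hk0n, hn0⟩) hk0
  -- counting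
  have hstep1 : ∑ z ∈ T, rootMultiplicity z (qC l n) = 2 ^ (l + n - 1) := by
    have : ∑ z ∈ T, rootMultiplicity z (qC l n) = ∑ z ∈ T, (qC l n).roots.count z := by
      apply Finset.sum_congr rfl
      intro z _
      rw [count_roots]
    rw [this, hT, Multiset.toFinset_sum_count_eq, hcard, hdeg]
  have hstep2 : ∑ z ∈ T, rootMultiplicity z (qC l n) =
      ∑ k ∈ n.divisors, ((_root_.eta l k) * (hyp k).ncard +
        ∑ j ∈ Finset.Icc 2 l, (mis j k).ncard) := by
    rw [Finset.sum_congr rfl hpoint, Finset.sum_comm]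
    apply Finset.sum_congr rfl
    intro k hk
    rw [Finset.sum_add_distrib]
    congr 1
    · -- ∑ z ∈ T, ite = eta * ncard
      have hset : hyp k = ↑(T.filter (fun z => z ∈ hyp k)) := by
        ext z
        simp only [Finset.coe_filter, Set.mem_setOf_eq]
        constructor
        · intro hz
          exact ⟨hmemT_hyp k hk z hz, hz⟩
        · intro hz
          exact hz.2
      have hcalc : (∑ z ∈ T, if z ∈ hyp k then _root_.eta l k else 0) =
          (T.filter (fun z => z ∈ hyp k)).card * _root_.eta l k := by
        rw [← Finset.sum_filter, Finset.sum_const, smul_eq_mul]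
      rw [hcalc]
      conv_rhs => rw [hset]
      rw [Set.ncard_coe_finset]
      ring
    · -- double sum
      rw [Finset.sum_comm]
      apply Finset.sum_congr rfl
      intro j hj
      have hset : mis j k = ↑(T.filter (fun z => z ∈ mis j k)) := by
        ext z
        simp only [Finset.coe_filter, Set.mem_setOf_eq]
        constructor
        · intro hz
          exact ⟨hmemT_mis k hk j hj z hz, hz⟩
        · intro hz
          exact hz.2
      have hcalc : (∑ z ∈ T, if z ∈ mis j k then 1 else 0) =
          (T.filter (fun z => z ∈ mis j k)).card := by
        rw [← Finset.sum_filter, Finset.sum_const, smul_eq_mul, mul_one]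
      rw [hcalc]
      conv_rhs => rw [hset]
      rw [Set.ncard_coe_finset]
  rw [← hstep2, hstep1]

/-- The degree identity: the multiplicities of the factorization of `q l n` sum to
its degree `2 ^ (l + n - 1)`. -/
theorem degree_identity (l n : ℕ) (hl : 2 ≤ l) (hn : 1 ≤ n) :
    ∑ k ∈ n.divisors,
        (eta l k * (hyp k).ncard + ∑ j ∈ Finset.Icc 2 l, (mis j k).ncard) =
      2 ^ (l + n - 1) := by
  exact degree_identity' l n hl hn
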